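/- For any θ, ν ∈ S¹ and any h ∈ [h_min, 1] (with h_min ≤ 1): (i) E_{(θ,h)(ν,h)} = E_{(ν,h)(θ,h)} or E_{(θ,h)(ν,h)} = −E_{(ν,h)(θ,h)}; and (ii) both E_{(θ,h)(ν,h)} and E_{(θ,h)} belong to the matrix class ℰ_{1/8, h_min^{−1}}, i.e. each such matrix E satisfies |det(E)| ≤ h_min^{−1} and |E|_∞ ≤ (√(1/4))^{−1}|det(E)| = 2|det(E)|. -/

import Mathlib

/-!
`Ē_{(θ,h)(ν,h)}` is `E_{(w,h)}` for `w = (θ + ν) / (2 (1 + |νᵀθ|))`, and `det E_{(w,h)} = |w|² / h`;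
every entry of `E_{(w,h)}` is at most `|wᵢ| / h` once `h ≤ 1`, so membership in `ℰ_{1/8,A}` reduces
to `|w|² / h ≤ A` and `|wᵢ| ≤ 2 |w|²`. For unit `θ, ν` with `νᵀθ ≥ 0` we have
`|θ + ν|² = 2 (1 + νᵀθ)`, hence `|w|² = 1 / (2 (1 + νᵀθ)) ≤ 1` and `|wᵢ| ≤ 1 / (1 + νᵀθ) = 2 |w|²`;
the sign convention ensures `νᵀθ ≥ 0` after replacing `θ` by `-θ`. That replacement turns `θ + ν`
into `ν - θ`, which is why exchanging `θ` and `ν` may flip the sign of `E_{(θ,h)(ν,h)}`.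
-/

open Real

noncomputable section

namespace SingleIndex

/-- Inner product of two points of `ℝ²`. -/
def dot2 (a b : Fin 2 → ℝ) : ℝ := a 0 * b 0 + a 1 * b 1

/-- The unit circle `S¹ ⊂ ℝ²`. -/
def S1 : Set (Fin 2 → ℝ) := {θ | θ 0 ^ 2 + θ 1 ^ 2 = 1}

/-- The matrix `E_{(θ,h)}`. -/
def Emat (θ : Fin 2 → ℝ) (h : ℝ) : Matrix (Fin 2) (Fin 2) ℝ :=
  !![θ 0 / h, θ 1 / h; -θ 1, θ 0]

/-- The matrix `Ē_{(θ,h)(ν,h)}`. -/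
def Ebar (θ ν : Fin 2 → ℝ) (h : ℝ) : Matrix (Fin 2) (Fin 2) ℝ :=
  !![(θ 0 + ν 0) / (2 * h * (1 + |dot2 ν θ|)), (θ 1 + ν 1) / (2 * h * (1 + |dot2 ν θ|));
     -((θ 1 + ν 1) / (2 * (1 + |dot2 ν θ|))), (θ 0 + ν 0) / (2 * (1 + |dot2 ν θ|))]

/-- The matrix `E_{(θ,h)(ν,h)}` with the sign convention. -/
def Epair (θ ν : Fin 2 → ℝ) (h : ℝ) : Matrix (Fin 2) (Fin 2) ℝ :=
  if 0 ≤ dot2 ν θ then Ebar θ ν h else Ebar (-θ) ν h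

/-- The matrix class `ℰ_{a,A}`: `|det E| ≤ A` and `|E|_∞ ≤ (√(2a))⁻¹ |det E|`. -/
def Ecal (a A : ℝ) : Set (Matrix (Fin 2) (Fin 2) ℝ) :=
  {E | |E.det| ≤ A ∧ ∀ i j : Fin 2, |E i j| ≤ (Real.sqrt (2 * a))⁻¹ * |E.det|}

lemma dot2_comm (a b : Fin 2 → ℝ) : dot2 a b = dot2 b a := by
  simp only [dot2]; ring

lemma dot2_neg_right (a b : Fin 2 → ℝ) : dot2 a (-b) = -dot2 a b := by
  simp only [dot2, Pi.neg_apply]; ring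

lemma neg_mem_S1 {θ : Fin 2 → ℝ} (hθ : θ ∈ S1) : -θ ∈ S1 := by
  simpa only [S1, Set.mem_ofPred_eq, Pi.neg_apply, neg_sq] using hθ

lemma abs_le_one_of_mem_S1 {θ : Fin 2 → ℝ} (hθ : θ ∈ S1) (i : Fin 2) : |θ i| ≤ 1 := by
  simp only [S1, Set.mem_ofPred_eq] at hθ
  have h0 : θ 0 ^ 2 ≤ 1 := by nlinarith [sq_nonneg (θ 1)]
  have h1 : θ 1 ^ 2 ≤ 1 := by nlinarith [sq_nonneg (θ 0)]
  rw [← sq_le_one_iff_abs_le_one]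
  fin_cases i
  exacts [h0, h1]

lemma sq_add_sq_of_mem_S1 {θ ν : Fin 2 → ℝ} (hθ : θ ∈ S1) (hν : ν ∈ S1) :
    (θ 0 + ν 0) ^ 2 + (θ 1 + ν 1) ^ 2 = 2 * (1 + dot2 ν θ) := by
  simp only [S1, Set.mem_ofPred_eq] at hθ hν
  simp only [dot2]
  linear_combination hθ + hν

lemma Emat_neg (w : Fin 2 → ℝ) (h : ℝ) : Emat (-w) h = -Emat w h := by
  ext i j
  fin_cases i <;> fin_cases j <;> simp [Emat, neg_div]

lemma det_Emat (w : Fin 2 → ℝ) (h : ℝ) : (Emat w h).det = (w 0 ^ 2 + w 1 ^ 2) / h := by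
  simp only [Emat, Matrix.det_fin_two_of]
  ring

lemma Ebar_eq_Emat (θ ν : Fin 2 → ℝ) (h : ℝ) :
    Ebar θ ν h = Emat ((2 * (1 + |dot2 ν θ|))⁻¹ • (θ + ν)) h := by
  ext i j
  fin_cases i <;> fin_cases j <;> simp [Ebar, Emat] <;> field_simp

lemma Ebar_comm (θ ν : Fin 2 → ℝ) (h : ℝ) : Ebar θ ν h = Ebar ν θ h := by
  rw [Ebar_eq_Emat, Ebar_eq_Emat, dot2_comm, add_comm θ]

lemma Ebar_neg_left (θ ν : Fin 2 → ℝ) (h : ℝ) : Ebar (-θ) ν h = -Ebar (-ν) θ h := by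
  rw [Ebar_eq_Emat, Ebar_eq_Emat, ← Emat_neg, dot2_neg_right, dot2_neg_right, abs_neg, abs_neg,
    dot2_comm, ← smul_neg, neg_add, neg_neg, add_comm (-θ)]

lemma Epair_comm_or_neg (θ ν : Fin 2 → ℝ) (h : ℝ) :
    Epair θ ν h = Epair ν θ h ∨ Epair θ ν h = -Epair ν θ h := by
  by_cases hd : 0 ≤ dot2 ν θ
  · left
    rw [Epair, Epair, dot2_comm θ ν, if_pos hd, if_pos hd, Ebar_comm]
  · right
    rw [Epair, Epair, dot2_comm θ ν, if_neg hd, if_neg hd, Ebar_neg_left]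

lemma inv_sqrt_two_mul_eighth : (√(2 * (1 / 8)))⁻¹ = (2 : ℝ) := by
  rw [show (2 * (1 / 8) : ℝ) = (1 / 2) ^ 2 by norm_num, Real.sqrt_sq (by norm_num)]
  norm_num

lemma Ecal_mono {a A B : ℝ} (hAB : A ≤ B) : Ecal a A ⊆ Ecal a B :=
  fun _ ⟨hdet, hentries⟩ => ⟨hdet.trans hAB, hentries⟩

lemma Emat_mem_Ecal {w : Fin 2 → ℝ} {h A : ℝ} (h0 : 0 < h) (h1 : h ≤ 1)
    (hdet : (w 0 ^ 2 + w 1 ^ 2) / h ≤ A) (hw : ∀ k, |w k| ≤ 2 * (w 0 ^ 2 + w 1 ^ 2)) :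
    Emat w h ∈ Ecal (1 / 8) A := by
  have hq : 0 ≤ (w 0 ^ 2 + w 1 ^ 2) / h := by positivity
  refine ⟨by rwa [det_Emat, abs_of_nonneg hq], fun i j => ?_⟩
  rw [inv_sqrt_two_mul_eighth, det_Emat, abs_of_nonneg hq]
  have hscaled : ∀ k, |w k / h| ≤ 2 * ((w 0 ^ 2 + w 1 ^ 2) / h) := fun k => by
    rw [abs_div, abs_of_pos h0, mul_div_assoc']
    exact div_le_div_of_nonneg_right (hw k) h0.le
  have hunscaled : ∀ k, |w k| ≤ 2 * ((w 0 ^ 2 + w 1 ^ 2) / h) := fun k =>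
    (le_div_self (abs_nonneg _) h0 h1).trans
      (by simpa only [abs_div, abs_of_pos h0] using hscaled k)
  fin_cases i <;> fin_cases j
  · exact hscaled 0
  · exact hscaled 1
  · simpa [Emat] using hunscaled 1
  · exact hunscaled 0

lemma Ebar_mem_Ecal {θ ν : Fin 2 → ℝ} {h : ℝ} (hθ : θ ∈ S1) (hν : ν ∈ S1)
    (hd : 0 ≤ dot2 ν θ) (h0 : 0 < h) (h1 : h ≤ 1) : Ebar θ ν h ∈ Ecal (1 / 8) h⁻¹ := by
  rw [Ebar_eq_Emat, abs_of_nonneg hd]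
  set c := (2 * (1 + dot2 ν θ))⁻¹
  have hc : 0 < c := by positivity
  have hc1 : c ≤ 1 := inv_le_one_of_one_le₀ (by linarith)
  have hsq : (c • (θ + ν)) 0 ^ 2 + (c • (θ + ν)) 1 ^ 2 = c := by
    simp only [Pi.smul_apply, Pi.add_apply, smul_eq_mul, mul_pow, ← mul_add,
      sq_add_sq_of_mem_S1 hθ hν]
    rw [sq, mul_assoc, inv_mul_cancel₀ (by positivity), mul_one]
  refine Emat_mem_Ecal h0 h1 ?_ fun k => ?_
  · rw [hsq, ← one_div]
    exact div_le_div_of_nonneg_right hc1 h0.le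
  · have hsum : |θ k + ν k| ≤ 2 :=
      (abs_add_le _ _).trans (by linarith [abs_le_one_of_mem_S1 hθ k, abs_le_one_of_mem_S1 hν k])
    rw [hsq, Pi.smul_apply, smul_eq_mul, abs_mul, abs_of_pos hc, mul_comm 2]
    exact mul_le_mul_of_nonneg_left hsum hc.le

lemma Epair_mem_Ecal {θ ν : Fin 2 → ℝ} {h : ℝ} (hθ : θ ∈ S1) (hν : ν ∈ S1)
    (h0 : 0 < h) (h1 : h ≤ 1) : Epair θ ν h ∈ Ecal (1 / 8) h⁻¹ := by
  by_cases hd : 0 ≤ dot2 ν θ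
  · rw [Epair, if_pos hd]
    exact Ebar_mem_Ecal hθ hν hd h0 h1
  · rw [Epair, if_neg hd]
    exact Ebar_mem_Ecal (neg_mem_S1 hθ) hν (by rw [dot2_neg_right]; linarith) h0 h1

lemma Emat_mem_Ecal_of_mem_S1 {θ : Fin 2 → ℝ} {h : ℝ} (hθ : θ ∈ S1) (h0 : 0 < h) (h1 : h ≤ 1) :
    Emat θ h ∈ Ecal (1 / 8) h⁻¹ := by
  have hsq : θ 0 ^ 2 + θ 1 ^ 2 = 1 := hθ
  refine Emat_mem_Ecal h0 h1 (by rw [hsq, one_div]) fun k => ?_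
  rw [hsq]
  linarith [abs_le_one_of_mem_S1 hθ k]

theorem Epair_symm_and_class_general
    (hMin : ℝ) (hMin0 : 0 < hMin)
    (θ : Fin 2 → ℝ) (hθ : θ ∈ S1) (ν : Fin 2 → ℝ) (hν : ν ∈ S1)
    (h : ℝ) (hhl : hMin ≤ h) (hh1 : h ≤ 1) :
    (Epair θ ν h = Epair ν θ h ∨ Epair θ ν h = -Epair ν θ h) ∧
    Epair θ ν h ∈ Ecal (1/8) hMin⁻¹ ∧
    Emat θ h ∈ Ecal (1/8) hMin⁻¹ := by
  have h0 : 0 < h := hMin0.trans_le hhl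
  have hEcal : Ecal (1 / 8) h⁻¹ ⊆ Ecal (1 / 8) hMin⁻¹ := Ecal_mono (inv_anti₀ hMin0 hhl)
  exact ⟨Epair_comm_or_neg θ ν h, hEcal (Epair_mem_Ecal hθ hν h0 hh1),
    hEcal (Emat_mem_Ecal_of_mem_S1 hθ h0 hh1)⟩

/-- for any `θ, ν ∈ S¹` and any `h ∈ [h_min, 1]` (with
`0 < h_min ≤ 1`): (i) `E_{(θ,h)(ν,h)} = ± E_{(ν,h)(θ,h)}`; (ii) both
`E_{(θ,h)(ν,h)}` and `E_{(θ,h)}` belong to `ℰ_{1/8, h_min⁻¹}`. -/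
theorem Epair_symm_and_class
    (hMin : ℝ) (hMin0 : 0 < hMin) (hMin1 : hMin ≤ 1)
    (θ : Fin 2 → ℝ) (hθ : θ ∈ S1) (ν : Fin 2 → ℝ) (hν : ν ∈ S1)
    (h : ℝ) (hhl : hMin ≤ h) (hh1 : h ≤ 1) :
    (Epair θ ν h = Epair ν θ h ∨ Epair θ ν h = -Epair ν θ h) ∧
    Epair θ ν h ∈ Ecal (1/8) hMin⁻¹ ∧
    Emat θ h ∈ Ecal (1/8) hMin⁻¹ :=
  Epair_symm_and_class_general hMin hMin0 θ hθ ν hν h hhl hh1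

end SingleIndex
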